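/- Let 𝓑 be a set partition of type C_n. Encode 𝓑 as a 0-1-filling of the staircase polyomino P_n (cells (c,r) with 1≤c≤n, c≤r≤2n−1) in two ways: in the nesting filling, the rows r=1,…,2n−1 are labelled from top to bottom by 2,3,…,n,−n,…,−2,−1 (the nesting order without 1), and the cell in column i and row labelled j carries entry 1 exactly when (i,j) is an arc of 𝓑 with positive opener i; in the crossing filling, the rows are labelled from top to bottom by 2,3,…,n,−1,−2,…,−n (the crossing order without 1), and the cell in column i and row labelled j carries entry 1 exactly when (i,j) is an arc of 𝓑 with positive opener i. Then the length of the longest north-east chain of the nesting filling equals the cardinality of a maximal nesting of 𝓑, and the length of the longest south-east chain of the crossing filling equals the cardinality of a maximal crossing of 𝓑. -/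
import Mathlib


open scoped Classical
noncomputable section

/-! ### Set partitions of type A -/

/-- A set partition of `[n] = {1,…,n}`: pairwise disjoint nonempty blocks covering `[n]`. -/
structure SetPartitionA (n : ℕ) where
  blocks : Finset (Finset ℕ)
  nonempty : ∀ B ∈ blocks, B.Nonempty
  disj : ∀ B ∈ blocks, ∀ B' ∈ blocks, B ≠ B' → Disjoint B B'
  cover : ∀ i : ℕ, (∃ B ∈ blocks, i ∈ B) ↔ i ∈ Finset.Icc 1 n

/-- Two arcs `(i,j)`, `(i',j')` cross if `i<i'<j<j'` (in either order of the two arcs). -/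
def ACross (a b : ℕ × ℕ) : Prop :=
  (a.1 < b.1 ∧ b.1 < a.2 ∧ a.2 < b.2) ∨ (b.1 < a.1 ∧ a.1 < b.2 ∧ b.2 < a.2)

/-- Two arcs `(i,j)`, `(i',j')` nest if `i<i'<j'<j` (in either order of the two arcs). -/
def ANest (a b : ℕ × ℕ) : Prop :=
  (a.1 < b.1 ∧ b.1 < b.2 ∧ b.2 < a.2) ∨ (b.1 < a.1 ∧ a.1 < a.2 ∧ a.2 < b.2)

namespace SetPartitionA

variable {n : ℕ}

/-- Openers: elements of `[n]` that are not the maximum of their block. -/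
def openers (P : SetPartitionA n) : Finset ℕ :=
  (Finset.Icc 1 n).filter fun i => ∃ B ∈ P.blocks, i ∈ B ∧ ∃ j ∈ B, i < j

/-- Closers: elements of `[n]` that are not the minimum of their block. -/
def closers (P : SetPartitionA n) : Finset ℕ :=
  (Finset.Icc 1 n).filter fun i => ∃ B ∈ P.blocks, i ∈ B ∧ ∃ j ∈ B, j < i

/-- `(i,j)` is an arc: `i < j` are in the same block with no block element in between. -/
def IsArc (P : SetPartitionA n) (i j : ℕ) : Prop :=
  i < j ∧ ∃ B ∈ P.blocks, i ∈ B ∧ j ∈ B ∧ ∀ k ∈ B, ¬(i < k ∧ k < j)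

/-- The finite set of arcs of `P`. -/
def arcs (P : SetPartitionA n) : Finset (ℕ × ℕ) :=
  ((Finset.Icc 1 n) ×ˢ (Finset.Icc 1 n)).filter fun p => P.IsArc p.1 p.2

/-- The number of crossings: pairs of arcs `(i,j)`, `(i',j')` with `i<i'<j<j'`. -/
def crossings (P : SetPartitionA n) : ℕ :=
  ((P.arcs ×ˢ P.arcs).filter fun q =>
    q.1.1 < q.2.1 ∧ q.2.1 < q.1.2 ∧ q.1.2 < q.2.2).card

/-- The number of nestings: pairs of arcs `(i,j)`, `(i',j')` with `i<i'<j'<j`. -/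
def nestings (P : SetPartitionA n) : ℕ :=
  ((P.arcs ×ˢ P.arcs).filter fun q =>
    q.1.1 < q.2.1 ∧ q.2.1 < q.2.2 ∧ q.2.2 < q.1.2).card

/-- The cardinality of a maximal crossing: largest set of mutually crossing arcs. -/
def maxCrossing (P : SetPartitionA n) : ℕ :=
  (P.arcs.powerset.filter fun S => ∀ a ∈ S, ∀ b ∈ S, a ≠ b → ACross a b).sup Finset.card

/-- The cardinality of a maximal nesting: largest set of mutually nesting arcs. -/
def maxNesting (P : SetPartitionA n) : ℕ :=
  (P.arcs.powerset.filter fun S => ∀ a ∈ S, ∀ b ∈ S, a ≠ b → ANest a b).sup Finset.card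

end SetPartitionA

/-! ### Set partitions of classical types B/C/D on `[±n]` -/

/-- Position of `i ∈ [±n]` in the type `C` nesting order `1<⋯<n<-n<⋯<-1`. -/
def nestOrd (n : ℕ) (i : ℤ) : ℤ := if 0 < i then i else 2 * n + 1 + i

/-- Position of `i ∈ [±n]` in the crossing order `1<⋯<n<-1<⋯<-n`. -/
def crossOrd (n : ℕ) (i : ℤ) : ℤ := if 0 < i then i else (n : ℤ) - i

/-- Position of `i ∈ [±n] ∪ {0}` in the type `B` nesting order `1<⋯<n<0<-n<⋯<-1`. -/
def nestOrdB (n : ℕ) (i : ℤ) : ℤ :=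
  if 0 < i then i else if i = 0 then (n : ℤ) + 1 else 2 * n + 2 + i

/-- The negative `-B` of a block. -/
def negSet (B : Finset ℤ) : Finset ℤ := B.image fun x => -x

/-- A set partition of type `B_n`/`C_n`: a set partition of `[±n]` with `B ∈ 𝓑 ↔ -B ∈ 𝓑`
and at most one block `B₀` with `B₀ = -B₀`. -/
structure SetPartitionC (n : ℕ) where
  blocks : Finset (Finset ℤ)
  nonempty : ∀ B ∈ blocks, B.Nonempty
  disj : ∀ B ∈ blocks, ∀ B' ∈ blocks, B ≠ B' → Disjoint B B'
  cover : ∀ i : ℤ, (∃ B ∈ blocks, i ∈ B) ↔ (i ≠ 0 ∧ |i| ≤ (n : ℤ))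
  symm : ∀ B ∈ blocks, negSet B ∈ blocks
  zeroBlock : ∀ B ∈ blocks, ∀ B' ∈ blocks, negSet B = B → negSet B' = B' → B = B'

/-- Endpoints of an arc, ordered by the crossing order. -/
def cpr (n : ℕ) (p : ℤ × ℤ) : ℤ × ℤ :=
  (min (crossOrd n p.1) (crossOrd n p.2), max (crossOrd n p.1) (crossOrd n p.2))

/-- `p` crosses `q` with `p` coming first in the crossing order. -/
def CrossRel (n : ℕ) (p q : ℤ × ℤ) : Prop :=
  (cpr n p).1 < (cpr n q).1 ∧ (cpr n q).1 < (cpr n p).2 ∧ (cpr n p).2 < (cpr n q).2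

/-- The two arcs `p`, `q` cross in the crossing diagram. -/
def Crosses (n : ℕ) (p q : ℤ × ℤ) : Prop := CrossRel n p q ∨ CrossRel n q p

/-- `p` nests over `q` in the nesting diagram (arcs written in nesting order). -/
def NestRel (n : ℕ) (p q : ℤ × ℤ) : Prop :=
  nestOrd n p.1 < nestOrd n q.1 ∧ nestOrd n q.2 < nestOrd n p.2

/-- The two arcs `p`, `q` nest in the nesting diagram. -/
def Nests (n : ℕ) (p q : ℤ × ℤ) : Prop := NestRel n p q ∨ NestRel n q p

/-- `p` nests over `q` in the type `B` nesting diagram. -/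
def NestRelB (n : ℕ) (p q : ℤ × ℤ) : Prop :=
  nestOrdB n p.1 < nestOrdB n q.1 ∧ nestOrdB n q.2 < nestOrdB n p.2

/-- The two arcs `p`, `q` nest in the type `B` nesting diagram. -/
def NestsB (n : ℕ) (p q : ℤ × ℤ) : Prop := NestRelB n p q ∨ NestRelB n q p

/-- Exceptional pairs for type `B` crossings: both arcs have positive opener and negative
closer, and at least one closer is smaller in absolute value than its opener. -/
def ExcCross (p q : ℤ × ℤ) : Prop :=
  0 < p.1 ∧ p.2 < 0 ∧ 0 < q.1 ∧ q.2 < 0 ∧ (|p.2| < |p.1| ∨ |q.2| < |q.1|)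

/-- Exceptional pairs for type `B` nestings: both arcs have positive opener (or begin at `0`)
and negative closer (or end at `0`), and at least one closer is smaller in absolute value
than its opener. -/
def ExcNest (p q : ℤ × ℤ) : Prop :=
  0 ≤ p.1 ∧ p.2 ≤ 0 ∧ 0 ≤ q.1 ∧ q.2 ≤ 0 ∧ (|p.2| < |p.1| ∨ |q.2| < |q.1|)

/-- A block augmented by `0` if it is the zero block. -/
def augB (B : Finset ℤ) : Finset ℤ := if negSet B = B then insert 0 B else B

/-- The arc `p` contains `n`. -/
def ContainsN (n : ℕ) (p : ℤ × ℤ) : Prop := p.1 = (n : ℤ) ∨ p.2 = (n : ℤ)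

/-- The arc `p` contains `-n`. -/
def ContainsNegN (n : ℕ) (p : ℤ × ℤ) : Prop := p.1 = -(n : ℤ) ∨ p.2 = -(n : ℤ)

namespace SetPartitionC

variable {n : ℕ}

/-- The ground set `[±n]` as a finset of integers. -/
def pmn (n : ℕ) : Finset ℤ := (Finset.Icc (-(n : ℤ)) (n : ℤ)).erase 0

/-- `(i,j)` is an arc: `i`, `j` are consecutive elements of a block in the nesting order. -/
def IsArc (P : SetPartitionC n) (i j : ℤ) : Prop :=
  nestOrd n i < nestOrd n j ∧ ∃ B ∈ P.blocks, i ∈ B ∧ j ∈ B ∧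
    ∀ k ∈ B, ¬(nestOrd n i < nestOrd n k ∧ nestOrd n k < nestOrd n j)

/-- The finite set of arcs of `P` (written in nesting order). -/
def arcs (P : SetPartitionC n) : Finset (ℤ × ℤ) :=
  (pmn n ×ˢ pmn n).filter fun p => P.IsArc p.1 p.2

/-- Openers: positive elements that are not maximal in their block w.r.t. the nesting order. -/
def openers (P : SetPartitionC n) : Finset ℤ :=
  (Finset.Icc 1 (n : ℤ)).filter fun i =>
    ∃ B ∈ P.blocks, i ∈ B ∧ ∃ j ∈ B, nestOrd n i < nestOrd n j

/-- Closers: positive elements that are not minimal in their block w.r.t. the nesting order. -/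
def closers (P : SetPartitionC n) : Finset ℤ :=
  (Finset.Icc 1 (n : ℤ)).filter fun i =>
    ∃ B ∈ P.blocks, i ∈ B ∧ ∃ j ∈ B, nestOrd n j < nestOrd n i

/-- The number of crossings of a type `C` set partition. -/
def crossings (P : SetPartitionC n) : ℕ :=
  ((P.arcs ×ˢ P.arcs).filter fun q => CrossRel n q.1 q.2).card

/-- The number of nestings of a type `C` set partition. -/
def nestings (P : SetPartitionC n) : ℕ :=
  ((P.arcs ×ˢ P.arcs).filter fun q => NestRel n q.1 q.2).card

/-- The number of crossings among pairs of arcs that both have positive opener. -/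
def crossingsPos (P : SetPartitionC n) : ℕ :=
  (((P.arcs.filter fun p => 0 < p.1) ×ˢ (P.arcs.filter fun p => 0 < p.1)).filter
    fun q => CrossRel n q.1 q.2).card

/-- The number of nestings among pairs of arcs that both have positive opener. -/
def nestingsPos (P : SetPartitionC n) : ℕ :=
  (((P.arcs.filter fun p => 0 < p.1) ×ˢ (P.arcs.filter fun p => 0 < p.1)).filter
    fun q => NestRel n q.1 q.2).card

/-- The cardinality of a maximal crossing. -/
def maxCrossing (P : SetPartitionC n) : ℕ :=
  (P.arcs.powerset.filter fun S => ∀ a ∈ S, ∀ b ∈ S, a ≠ b → Crosses n a b).sup Finset.card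

/-- The cardinality of a maximal nesting. -/
def maxNesting (P : SetPartitionC n) : ℕ :=
  (P.arcs.powerset.filter fun S => ∀ a ∈ S, ∀ b ∈ S, a ≠ b → Nests n a b).sup Finset.card

/-! ### Type B notions -/

/-- `(i,j)` is a type `B` nesting arc: consecutive elements of an augmented block in the
type `B` nesting order. -/
def IsArcB (P : SetPartitionC n) (i j : ℤ) : Prop :=
  nestOrdB n i < nestOrdB n j ∧ ∃ B ∈ P.blocks, i ∈ augB B ∧ j ∈ augB B ∧
    ∀ k ∈ augB B, ¬(nestOrdB n i < nestOrdB n k ∧ nestOrdB n k < nestOrdB n j)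

/-- The finite set of type `B` nesting arcs of `P`. -/
def arcsB (P : SetPartitionC n) : Finset (ℤ × ℤ) :=
  ((insert 0 (pmn n)) ×ˢ (insert 0 (pmn n))).filter fun p => P.IsArcB p.1 p.2

/-- The number of type `B` crossings. -/
def crossingsB (P : SetPartitionC n) : ℕ :=
  ((P.arcs ×ˢ P.arcs).filter fun q => CrossRel n q.1 q.2 ∧ ¬ExcCross q.1 q.2).card

/-- The number of type `B` nestings. -/
def nestingsB (P : SetPartitionC n) : ℕ :=
  ((P.arcsB ×ˢ P.arcsB).filter fun q => NestRelB n q.1 q.2 ∧ ¬ExcNest q.1 q.2).card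

/-- Openers in type `B`: positive elements not maximal in their block
w.r.t. the type `B` nesting order. -/
def openersB (P : SetPartitionC n) : Finset ℤ :=
  (Finset.Icc 1 (n : ℤ)).filter fun i =>
    ∃ B ∈ P.blocks, i ∈ B ∧ ∃ j ∈ B, nestOrdB n i < nestOrdB n j

/-- Closers in type `B`: positive elements not minimal in their block
w.r.t. the type `B` nesting order. -/
def closersB (P : SetPartitionC n) : Finset ℤ :=
  (Finset.Icc 1 (n : ℤ)).filter fun i =>
    ∃ B ∈ P.blocks, i ∈ B ∧ ∃ j ∈ B, nestOrdB n j < nestOrdB n i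

/-- The cardinality of a maximal type `B` crossing. -/
def maxCrossingB (P : SetPartitionC n) : ℕ :=
  (P.arcs.powerset.filter fun S =>
    ∀ a ∈ S, ∀ b ∈ S, a ≠ b → Crosses n a b ∧ ¬ExcCross a b).sup Finset.card

/-- The cardinality of a maximal type `B` nesting. -/
def maxNestingB (P : SetPartitionC n) : ℕ :=
  (P.arcsB.powerset.filter fun S =>
    ∀ a ∈ S, ∀ b ∈ S, a ≠ b → NestsB n a b ∧ ¬ExcNest a b).sup Finset.card

/-! ### Type D notions -/

/-- A type `C` set partition is of type `D` if the zero block, when present, is not a single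
pair `{i,-i}`. -/
def IsTypeD (P : SetPartitionC n) : Prop :=
  ∀ B ∈ P.blocks, negSet B = B → B.card ≠ 2

/-- The arcs starting in `{1,…,n-1}` and ending in the negative of an element of `{1,…,n-1}`. -/
def pnArcs (P : SetPartitionC n) : Finset (ℤ × ℤ) :=
  P.arcs.filter fun p => 0 < p.1 ∧ p.1 < (n : ℤ) ∧ -(n : ℤ) < p.2 ∧ p.2 < 0

/-- The index `l` of an arc `a = (i_l, -j_l)` in the list of `pnArcs` ordered by openers. -/
def dRank (P : SetPartitionC n) (a : ℤ × ℤ) : ℕ :=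
  (P.pnArcs.filter fun b => b.1 ≤ a.1).card

/-- The crossings allowed in a non-crossing set partition of type `D`. -/
def AllowedCrossD (P : SetPartitionC n) (p q : ℤ × ℤ) : Prop :=
  (ContainsN n p ∧ q ∈ P.pnArcs ∧ P.pnArcs.card < 2 * P.dRank q) ∨
  (ContainsN n q ∧ p ∈ P.pnArcs ∧ P.pnArcs.card < 2 * P.dRank p) ∨
  (ContainsNegN n p ∧ q ∈ P.pnArcs ∧ 2 * P.dRank q ≤ P.pnArcs.card) ∨
  (ContainsNegN n q ∧ p ∈ P.pnArcs ∧ 2 * P.dRank p ≤ P.pnArcs.card) ∨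
  (ContainsN n p ∧ ContainsNegN n q) ∨
  (ContainsN n q ∧ ContainsNegN n p)

/-- `P` is a non-crossing set partition of type `D_n`. -/
def NonCrossingD (P : SetPartitionC n) : Prop :=
  (∀ i : ℤ, 0 < i → P.IsArc i (-i) → i = n) ∧
  (∀ p ∈ P.arcs, ∀ q ∈ P.arcs, Crosses n p q → P.AllowedCrossD p q) ∧
  (∀ p ∈ P.arcs, ContainsN n p →
    ∀ q ∈ P.pnArcs, P.pnArcs.card < 2 * P.dRank q → Crosses n p q) ∧
  (∀ p ∈ P.arcs, ContainsNegN n p →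
    ∀ q ∈ P.pnArcs, 2 * P.dRank q ≤ P.pnArcs.card → Crosses n p q)

/-- The nestings (`p` over `q`) allowed in a non-nesting set partition of type `D`. -/
def AllowedNestD (P : SetPartitionC n) (p q : ℤ × ℤ) : Prop :=
  (0 < p.1 ∧ p.1 < q.1 ∧ q.1 < (n : ℤ) ∧ p.2 = -(n : ℤ) ∧ q.2 = (n : ℤ)) ∨
  (q.1 = (n : ℤ) ∧ q.2 = -(n : ℤ) ∧ 0 < p.1 ∧ p.1 < (n : ℤ) ∧ -(n : ℤ) < p.2 ∧ p.2 < 0 ∧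
    ∃ m : ℤ, 0 < m ∧ m < p.1 ∧ m < -p.2 ∧ P.IsArc m (n : ℤ))

/-- `P` is a non-nesting set partition of type `D_n`. -/
def NonNestingD (P : SetPartitionC n) : Prop :=
  (∀ i : ℤ, 0 < i → P.IsArc i (-i) → i = n) ∧
  (∀ p ∈ P.arcs, ∀ q ∈ P.arcs, NestRel n p q → P.AllowedNestD p q)

end SetPartitionC

/-! ### The staircase polyomino and chains in fillings -/

/-- The cells of the staircase polyomino `P_n`: `(c,r)` with `1 ≤ c ≤ n`, `c ≤ r ≤ 2n-1`. -/
def cellsP (n : ℕ) : Finset (ℕ × ℕ) :=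
  ((Finset.Icc 1 n) ×ˢ (Finset.Icc 1 (2 * n - 1))).filter fun p => p.1 ≤ p.2

/-- The length of the longest north-east chain among a set of (nonzero) cells:
columns strictly increase while rows strictly decrease. -/
def neLen (S : Finset (ℕ × ℕ)) : ℕ :=
  (S.powerset.filter fun T =>
    ∀ a ∈ T, ∀ b ∈ T, a ≠ b →
      (a.1 < b.1 ∧ b.2 < a.2) ∨ (b.1 < a.1 ∧ a.2 < b.2)).sup Finset.card

/-- The length of the longest south-east chain among a set of (nonzero) cells:
columns and rows strictly increase, and the surrounding rectangle lies in the polyomino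
(`a.1 ≤ b.2` for all cells `a`, `b` of the chain). -/
def seLen (S : Finset (ℕ × ℕ)) : ℕ :=
  (S.powerset.filter fun T =>
    (∀ a ∈ T, ∀ b ∈ T, a ≠ b →
      (a.1 < b.1 ∧ a.2 < b.2) ∨ (b.1 < a.1 ∧ b.2 < a.2)) ∧
    ∀ a ∈ T, ∀ b ∈ T, a.1 ≤ b.2).sup Finset.card

namespace SetPartitionC

variable {n : ℕ}

/-- The cells filled with `1` in the nesting filling of the staircase polyomino: rows are
labelled from top to bottom by `2,…,n,-n,…,-1`; the cell in column `i` and row labelled `j`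
is filled iff `(i,j)` is an arc with positive opener `i`. -/
def nestFill (P : SetPartitionC n) : Finset (ℕ × ℕ) :=
  (cellsP n).filter fun c => ∃ j : ℤ, P.IsArc (c.1 : ℤ) j ∧ nestOrd n j = (c.2 : ℤ) + 1

/-- The cells filled with `1` in the crossing filling of the staircase polyomino: rows are
labelled from top to bottom by `2,…,n,-1,…,-n`; the cell in column `i` and row labelled `j`
is filled iff `(i,j)` is an arc with positive opener `i`. -/
def crossFill (P : SetPartitionC n) : Finset (ℕ × ℕ) :=
  (cellsP n).filter fun c => ∃ j : ℤ, P.IsArc (c.1 : ℤ) j ∧ crossOrd n j = (c.2 : ℤ) + 1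

end SetPartitionC

/-! ### Triangulations of the symmetric 2n-gon and symmetric fans of Dyck paths -/

/-- `p` is a diagonal of the `2n`-gon with vertices labelled by `[±n]`, written with its two
(distinct) endpoints in crossing order. -/
def IsDiag (n : ℕ) (p : ℤ × ℤ) : Prop :=
  p.1 ≠ 0 ∧ p.2 ≠ 0 ∧ |p.1| ≤ (n : ℤ) ∧ |p.2| ≤ (n : ℤ) ∧ crossOrd n p.1 < crossOrd n p.2

/-- Normalize a pair so that its endpoints are in crossing order. -/
def normD (n : ℕ) (p : ℤ × ℤ) : ℤ × ℤ :=
  if crossOrd n p.1 < crossOrd n p.2 then p else (p.2, p.1)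

/-- `ω` contains `m` mutually crossing diagonals. -/
def HasMCross (n m : ℕ) (ω : Finset (ℤ × ℤ)) : Prop :=
  ∃ S ⊆ ω, S.card = m ∧ ∀ a ∈ S, ∀ b ∈ S, a ≠ b → Crosses n a b

/-- A type `C_n` `k`-triangulation: a symmetric set of diagonals with no `(k+1)`-crossing,
maximal with this property. -/
def IsTriangC (n k : ℕ) (ω : Finset (ℤ × ℤ)) : Prop :=
  (∀ p ∈ ω, IsDiag n p) ∧
  (∀ p ∈ ω, normD n (-p.1, -p.2) ∈ ω) ∧
  ¬HasMCross n (k + 1) ω ∧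
  ∀ d : ℤ × ℤ, IsDiag n d → d ∉ ω → HasMCross n (k + 1) (insert d ω)

/-- A Dyck path in the staircase polyomino starting at the top cell `(i,i)` of column `i`,
proceeding by unit south or west steps inside `P_n`, and ending on the main diagonal
`r = 2n - c`. -/
def IsDyckPath (n i : ℕ) (l : List (ℕ × ℕ)) : Prop :=
  l ≠ [] ∧ l.head? = some (i, i) ∧ (∀ c ∈ l, c ∈ cellsP n) ∧
  l.Chain' (fun a b => (b.1 = a.1 ∧ b.2 = a.2 + 1) ∨ (b.1 + 1 = a.1 ∧ b.2 = a.2)) ∧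
  ∀ c : ℕ × ℕ, l.getLast? = some c → c.2 = 2 * n - c.1

/-- A symmetric fan of `k` non-intersecting Dyck paths: the `i`-th path starts at cell
`(i,i)` and the paths are pairwise cell-disjoint. -/
def IsSymFan (n k : ℕ) (f : Fin k → List (ℕ × ℕ)) : Prop :=
  (∀ i : Fin k, IsDyckPath n ((i : ℕ) + 1) (f i)) ∧
  ∀ i j : Fin k, i ≠ j → ∀ c ∈ f i, c ∉ f j

namespace SetPartitionC

variable {n : ℕ} {P : SetPartitionC n}

lemma mem_pmn' {x : ℤ} : x ∈ pmn n ↔ x ≠ 0 ∧ -(n:ℤ) ≤ x ∧ x ≤ n := by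
  simp [pmn, Finset.mem_erase, Finset.mem_Icc, and_assoc]

lemma nestOrd_spec {x : ℤ} (hx : x ∈ pmn n) :
    (0 < x ∧ x ≤ n ∧ nestOrd n x = x ∧ nestOrd n (-x) = 2*n+1-x) ∨
    (x < 0 ∧ -(n:ℤ) ≤ x ∧ nestOrd n x = 2*n+1+x ∧ nestOrd n (-x) = -x) := by
  rw [mem_pmn'] at hx
  unfold nestOrd
  split_ifs <;> omega

lemma crossOrd_spec {x : ℤ} (hx : x ∈ pmn n) :
    (0 < x ∧ x ≤ n ∧ crossOrd n x = x ∧ crossOrd n (-x) = x + n) ∨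
    (x < 0 ∧ -(n:ℤ) ≤ x ∧ crossOrd n x = n - x ∧ crossOrd n (-x) = -x) := by
  rw [mem_pmn'] at hx
  unfold crossOrd
  split_ifs <;> omega

lemma nestOrd_of_pos {x : ℤ} (hx : 0 < x) : nestOrd n x = x := by
  simp [nestOrd, hx]

lemma crossOrd_of_pos {x : ℤ} (hx : 0 < x) : crossOrd n x = x := by
  simp [crossOrd, hx]

lemma mem_pmn_of_block {B : Finset ℤ} {x : ℤ} (hB : B ∈ P.blocks) (hx : x ∈ B) :
    x ∈ pmn n := by
  have h := (P.cover x).mp ⟨B, hB, hx⟩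
  rcases abs_le.mp h.2 with ⟨h1, h2⟩
  exact mem_pmn'.mpr ⟨h.1, h1, h2⟩

lemma isArc_pmn {i j : ℤ} (h : P.IsArc i j) : i ∈ pmn n ∧ j ∈ pmn n := by
  obtain ⟨_, B, hB, hi, hj, _⟩ := h
  exact ⟨mem_pmn_of_block hB hi, mem_pmn_of_block hB hj⟩

lemma mem_arcs {p : ℤ × ℤ} : p ∈ P.arcs ↔ P.IsArc p.1 p.2 := by
  unfold arcs
  rw [Finset.mem_filter, Finset.mem_product]
  exact ⟨fun h => h.2, fun h => ⟨⟨(isArc_pmn h).1, (isArc_pmn h).2⟩, h⟩⟩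

lemma isArc_neg {i j : ℤ} (h : P.IsArc i j) : P.IsArc (-j) (-i) := by
  obtain ⟨hlt, B, hB, hi, hj, hmid⟩ := h
  have hi' := nestOrd_spec (mem_pmn_of_block hB hi)
  have hj' := nestOrd_spec (mem_pmn_of_block hB hj)
  refine ⟨by omega, negSet B, P.symm B hB,
    Finset.mem_image.mpr ⟨j, hj, rfl⟩, Finset.mem_image.mpr ⟨i, hi, rfl⟩, ?_⟩
  rintro k hk ⟨h1, h2⟩
  obtain ⟨k', hk', rfl⟩ := Finset.mem_image.mp hk
  have hk'' := nestOrd_spec (mem_pmn_of_block hB hk')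
  exact hmid k' hk' (by omega)

/-- The negated arc, written in nesting order. -/
def negArc (p : ℤ × ℤ) : ℤ × ℤ := (-p.2, -p.1)

lemma negArc_mem {p : ℤ × ℤ} (hp : p ∈ P.arcs) : negArc p ∈ P.arcs :=
  mem_arcs.mpr (isArc_neg (mem_arcs.mp hp))

lemma negArc_inj : Function.Injective negArc := by
  intro p q h
  unfold negArc at h
  have h1 := congrArg Prod.fst h
  have h2 := congrArg Prod.snd h
  simp only at h1 h2
  exact Prod.ext (by omega) (by omega)

/-- The positive-opener representative of an arc in the nesting diagram. -/
def posArc (n : ℕ) (p : ℤ × ℤ) : ℤ × ℤ :=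
  if nestOrd n p.1 + nestOrd n p.2 ≤ 2*n+1 then p else negArc p

lemma posArc_mem {p : ℤ × ℤ} (hp : p ∈ P.arcs) : posArc n p ∈ P.arcs := by
  unfold posArc
  split_ifs
  · exact hp
  · exact negArc_mem hp

lemma posArc_pos {p : ℤ × ℤ} (hp : p ∈ P.arcs) : 0 < (posArc n p).1 := by
  have hArc := mem_arcs.mp hp
  have h1 := nestOrd_spec (isArc_pmn hArc).1
  have h2 := nestOrd_spec (isArc_pmn hArc).2
  have hlt := hArc.1
  unfold posArc negArc
  split_ifs with hc <;> (try dsimp only) <;> omega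

lemma posArc_nests {p q : ℤ × ℤ} (hp : p ∈ P.arcs) (hq : q ∈ P.arcs)
    (h : Nests n p q) : Nests n (posArc n p) (posArc n q) := by
  have h1 := nestOrd_spec (isArc_pmn (mem_arcs.mp hp)).1
  have h2 := nestOrd_spec (isArc_pmn (mem_arcs.mp hp)).2
  have h3 := nestOrd_spec (isArc_pmn (mem_arcs.mp hq)).1
  have h4 := nestOrd_spec (isArc_pmn (mem_arcs.mp hq)).2
  unfold Nests NestRel at h ⊢
  unfold posArc negArc
  split_ifs <;> (try dsimp only) <;> omega

lemma negArc_crosses {p q : ℤ × ℤ} (hp : p ∈ P.arcs) (hq : q ∈ P.arcs)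
    (h : Crosses n p q) : Crosses n (negArc p) (negArc q) := by
  have h1 := crossOrd_spec (isArc_pmn (mem_arcs.mp hp)).1
  have h2 := crossOrd_spec (isArc_pmn (mem_arcs.mp hp)).2
  have h3 := crossOrd_spec (isArc_pmn (mem_arcs.mp hq)).1
  have h4 := crossOrd_spec (isArc_pmn (mem_arcs.mp hq)).2
  unfold Crosses CrossRel cpr negArc
  unfold Crosses CrossRel cpr at h
  dsimp only at h ⊢
  omega

lemma arc_signs {p : ℤ × ℤ} (hp : p ∈ P.arcs) : 0 < p.1 ∨ (p.1 < 0 ∧ p.2 < 0) := by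
  have hArc := mem_arcs.mp hp
  have h1 := nestOrd_spec (isArc_pmn hArc).1
  have h2 := nestOrd_spec (isArc_pmn hArc).2
  have hlt := hArc.1
  omega

lemma crosses_sign {p q : ℤ × ℤ} (hp : p ∈ P.arcs) (hq : q ∈ P.arcs)
    (h : Crosses n p q) (hq1 : q.1 < 0) : p.2 < 0 := by
  have hArcp := mem_arcs.mp hp
  have hArcq := mem_arcs.mp hq
  have n1 := nestOrd_spec (isArc_pmn hArcp).1
  have n2 := nestOrd_spec (isArc_pmn hArcp).2
  have n3 := nestOrd_spec (isArc_pmn hArcq).1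
  have n4 := nestOrd_spec (isArc_pmn hArcq).2
  have c1 := crossOrd_spec (isArc_pmn hArcp).1
  have c2 := crossOrd_spec (isArc_pmn hArcp).2
  have c3 := crossOrd_spec (isArc_pmn hArcq).1
  have c4 := crossOrd_spec (isArc_pmn hArcq).2
  have hltp := hArcp.1
  have hltq := hArcq.1
  unfold Crosses CrossRel cpr at h
  dsimp only at h
  omega

end SetPartitionC

namespace SetPartitionC

variable {n : ℕ} {P : SetPartitionC n}

lemma cell_mem_nestFill {a : ℤ × ℤ} (ha : a ∈ P.arcs) (hpa : 0 < a.1) :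
    (a.1.toNat, (nestOrd n a.2 - 1).toNat) ∈ P.nestFill := by
  have hArc := mem_arcs.mp ha
  have h1 := nestOrd_spec (isArc_pmn hArc).1
  have h2 := nestOrd_spec (isArc_pmn hArc).2
  have hlt := hArc.1
  simp only [nestFill, cellsP, Finset.mem_filter, Finset.mem_product, Finset.mem_Icc]
  refine ⟨⟨⟨⟨by omega, by omega⟩, by omega, by omega⟩, by omega⟩, a.2, ?_, by omega⟩
  have h : ((a.1.toNat : ℤ)) = a.1 := by omega
  rw [h]; exact hArc

lemma nests_cells {a b : ℤ × ℤ} (ha : a ∈ P.arcs) (hb : b ∈ P.arcs)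
    (hpa : 0 < a.1) (hpb : 0 < b.1) (h : Nests n a b) :
    (a.1.toNat < b.1.toNat ∧ (nestOrd n b.2 - 1).toNat < (nestOrd n a.2 - 1).toNat) ∨
    (b.1.toNat < a.1.toNat ∧ (nestOrd n a.2 - 1).toNat < (nestOrd n b.2 - 1).toNat) := by
  have h1 := nestOrd_spec (isArc_pmn (mem_arcs.mp ha)).1
  have h2 := nestOrd_spec (isArc_pmn (mem_arcs.mp ha)).2
  have h3 := nestOrd_spec (isArc_pmn (mem_arcs.mp hb)).1
  have h4 := nestOrd_spec (isArc_pmn (mem_arcs.mp hb)).2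
  have hla := (mem_arcs.mp ha).1
  have hlb := (mem_arcs.mp hb).1
  unfold Nests NestRel at h
  omega

lemma le_neLen (P : SetPartitionC n) : P.maxNesting ≤ neLen P.nestFill := by
  unfold maxNesting neLen
  apply Finset.sup_le
  intro S hS
  simp only [Finset.mem_filter, Finset.mem_powerset] at hS
  obtain ⟨hSsub, hSnest⟩ := hS
  set f : ℤ × ℤ → ℕ × ℕ :=
    fun p => ((posArc n p).1.toNat, (nestOrd n (posArc n p).2 - 1).toNat) with hf
  have key : ∀ p ∈ S, ∀ q ∈ S, p ≠ q → Nests n (posArc n p) (posArc n q) :=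
    fun p hp q hq hne => posArc_nests (hSsub hp) (hSsub hq) (hSnest p hp q hq hne)
  have hcells : ∀ p ∈ S, ∀ q ∈ S, p ≠ q →
      ((f p).1 < (f q).1 ∧ (f q).2 < (f p).2) ∨ ((f q).1 < (f p).1 ∧ (f p).2 < (f q).2) := by
    intro p hp q hq hne
    exact nests_cells (posArc_mem (hSsub hp)) (posArc_mem (hSsub hq))
      (posArc_pos (hSsub hp)) (posArc_pos (hSsub hq)) (key p hp q hq hne)
  have hinj : Set.InjOn f S := by
    intro p hp q hq hfe
    by_contra hne
    rcases hcells p hp q hq hne with ⟨h', _⟩ | ⟨h', _⟩ <;>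
      rw [hfe] at h' <;> exact lt_irrefl _ h'
  rw [show S.card = (S.image f).card from (Finset.card_image_of_injOn hinj).symm]
  apply Finset.le_sup
  simp only [Finset.mem_filter, Finset.mem_powerset]
  constructor
  · intro c hc
    obtain ⟨p, hp, rfl⟩ := Finset.mem_image.mp hc
    exact cell_mem_nestFill (posArc_mem (hSsub hp)) (posArc_pos (hSsub hp))
  · intro a ha b hb hne
    obtain ⟨p, hp, rfl⟩ := Finset.mem_image.mp ha
    obtain ⟨q, hq, rfl⟩ := Finset.mem_image.mp hb
    exact hcells p hp q hq (fun h => hne (by rw [h]))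

lemma neLen_le (P : SetPartitionC n) : neLen P.nestFill ≤ P.maxNesting := by
  unfold neLen maxNesting
  apply Finset.sup_le
  intro T hT
  simp only [Finset.mem_filter, Finset.mem_powerset] at hT
  obtain ⟨hTsub, hTchain⟩ := hT
  have hex : ∀ c ∈ T, ∃ jj : ℤ, P.IsArc (c.1 : ℤ) jj ∧ nestOrd n jj = (c.2 : ℤ) + 1 := by
    intro c hc
    have h := hTsub hc
    unfold nestFill at h
    exact (Finset.mem_filter.mp h).2
  have hcell : ∀ c ∈ T, 1 ≤ c.1 ∧ c.1 ≤ n := by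
    intro c hc
    have h := hTsub hc
    unfold nestFill cellsP at h
    have h' := Finset.mem_filter.mp (Finset.mem_filter.mp h).1
    simp only [Finset.mem_product, Finset.mem_Icc] at h'
    exact h'.1.1
  choose! j hj1 hj2 using hex
  set g : ℕ × ℕ → ℤ × ℤ := fun c => ((c.1 : ℤ), j c) with hg
  have hinj : Set.InjOn g T := by
    intro c hc d hd he
    have e1 : (c.1 : ℤ) = (d.1 : ℤ) := congrArg Prod.fst he
    have e2 : j c = j d := congrArg Prod.snd he
    have e3 := hj2 c hc
    have e4 := hj2 d hd
    rw [e2] at e3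
    exact Prod.ext (by omega) (by omega)
  rw [show T.card = (T.image g).card from (Finset.card_image_of_injOn hinj).symm]
  apply Finset.le_sup
  simp only [Finset.mem_filter, Finset.mem_powerset]
  constructor
  · intro x hx
    obtain ⟨c, hc, rfl⟩ := Finset.mem_image.mp hx
    exact mem_arcs.mpr (hj1 c hc)
  · intro x hx y hy hne
    obtain ⟨c, hc, rfl⟩ := Finset.mem_image.mp hx
    obtain ⟨d, hd, rfl⟩ := Finset.mem_image.mp hy
    have hcd : c ≠ d := fun h => hne (by rw [h])
    have hc1 := hcell c hc
    have hd1 := hcell d hd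
    have e3 := hj2 c hc
    have e4 := hj2 d hd
    have o1 : nestOrd n ((c.1 : ℕ) : ℤ) = ((c.1 : ℕ) : ℤ) :=
      nestOrd_of_pos (by omega)
    have o2 : nestOrd n ((d.1 : ℕ) : ℤ) = ((d.1 : ℕ) : ℤ) :=
      nestOrd_of_pos (by omega)
    have h := hTchain c hc d hd hcd
    unfold Nests NestRel
    dsimp only [g]
    rw [o1, o2, e3, e4]
    omega

lemma crossOrd_facts {a : ℤ × ℤ} (ha : a ∈ P.arcs) (hpa : 0 < a.1) :
    crossOrd n a.1 = a.1 ∧ a.1 ≤ n ∧ a.1 < crossOrd n a.2 ∧ crossOrd n a.2 ≤ 2*n := by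
  have hArc := mem_arcs.mp ha
  have n1 := nestOrd_spec (isArc_pmn hArc).1
  have n2 := nestOrd_spec (isArc_pmn hArc).2
  have c1 := crossOrd_spec (isArc_pmn hArc).1
  have c2 := crossOrd_spec (isArc_pmn hArc).2
  have hlt := hArc.1
  omega

lemma cell_mem_crossFill {a : ℤ × ℤ} (ha : a ∈ P.arcs) (hpa : 0 < a.1) :
    (a.1.toNat, (crossOrd n a.2 - 1).toNat) ∈ P.crossFill := by
  have hArc := mem_arcs.mp ha
  have hf := crossOrd_facts ha hpa
  simp only [crossFill, cellsP, Finset.mem_filter, Finset.mem_product, Finset.mem_Icc]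
  refine ⟨⟨⟨⟨by omega, by omega⟩, by omega, by omega⟩, by omega⟩, a.2, ?_, by omega⟩
  have h : ((a.1.toNat : ℤ)) = a.1 := by omega
  rw [h]; exact hArc

lemma crosses_cells {a b : ℤ × ℤ} (ha : a ∈ P.arcs) (hb : b ∈ P.arcs)
    (hpa : 0 < a.1) (hpb : 0 < b.1) (h : Crosses n a b) :
    ((a.1.toNat < b.1.toNat ∧ (crossOrd n a.2 - 1).toNat < (crossOrd n b.2 - 1).toNat) ∨
     (b.1.toNat < a.1.toNat ∧ (crossOrd n b.2 - 1).toNat < (crossOrd n a.2 - 1).toNat)) ∧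
    a.1.toNat ≤ (crossOrd n b.2 - 1).toNat ∧ b.1.toNat ≤ (crossOrd n a.2 - 1).toNat := by
  have hfa := crossOrd_facts ha hpa
  have hfb := crossOrd_facts hb hpb
  unfold Crosses CrossRel cpr at h
  dsimp only at h
  omega

lemma seLen_aux (P : SetPartitionC n) (S : Finset (ℤ × ℤ)) (hSsub : S ⊆ P.arcs)
    (hScross : ∀ a ∈ S, ∀ b ∈ S, a ≠ b → Crosses n a b) (hall : ∀ p ∈ S, 0 < p.1) :
    S.card ≤ seLen P.crossFill := by
  unfold seLen
  set f : ℤ × ℤ → ℕ × ℕ := fun p => (p.1.toNat, (crossOrd n p.2 - 1).toNat) with hf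
  have hcells : ∀ p ∈ S, ∀ q ∈ S, p ≠ q →
      (((f p).1 < (f q).1 ∧ (f p).2 < (f q).2) ∨ ((f q).1 < (f p).1 ∧ (f q).2 < (f p).2)) ∧
      (f p).1 ≤ (f q).2 ∧ (f q).1 ≤ (f p).2 :=
    fun p hp q hq hne => crosses_cells (hSsub hp) (hSsub hq) (hall p hp) (hall q hq)
      (hScross p hp q hq hne)
  have hinj : Set.InjOn f S := by
    intro p hp q hq hfe
    by_contra hne
    rcases (hcells p hp q hq hne).1 with ⟨h', _⟩ | ⟨h', _⟩ <;>
      rw [hfe] at h' <;> exact lt_irrefl _ h'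
  rw [show S.card = (S.image f).card from (Finset.card_image_of_injOn hinj).symm]
  apply Finset.le_sup
  simp only [Finset.mem_filter, Finset.mem_powerset]
  refine ⟨?_, ?_, ?_⟩
  · intro c hc
    obtain ⟨p, hp, rfl⟩ := Finset.mem_image.mp hc
    exact cell_mem_crossFill (hSsub hp) (hall p hp)
  · intro a ha b hb hne
    obtain ⟨p, hp, rfl⟩ := Finset.mem_image.mp ha
    obtain ⟨q, hq, rfl⟩ := Finset.mem_image.mp hb
    exact (hcells p hp q hq (fun h => hne (by rw [h]))).1
  · intro a ha b hb
    obtain ⟨p, hp, rfl⟩ := Finset.mem_image.mp ha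
    obtain ⟨q, hq, rfl⟩ := Finset.mem_image.mp hb
    by_cases hpq : p = q
    · subst hpq
      have hfp := crossOrd_facts (hSsub hp) (hall p hp)
      dsimp only [f]
      omega
    · exact ((hcells p hp q hq hpq).2).1

lemma le_seLen (P : SetPartitionC n) : P.maxCrossing ≤ seLen P.crossFill := by
  unfold maxCrossing
  apply Finset.sup_le
  intro S hS
  simp only [Finset.mem_filter, Finset.mem_powerset] at hS
  obtain ⟨hSsub, hScross⟩ := hS
  by_cases hall : ∀ p ∈ S, 0 < p.1
  · exact seLen_aux P S hSsub hScross hall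
  · push_neg at hall
    obtain ⟨q, hq, hq1⟩ := hall
    have hq1' : q.1 < 0 := by
      have := mem_pmn'.mp (isArc_pmn (mem_arcs.mp (hSsub hq))).1
      omega
    have hneg : ∀ p ∈ S, p.2 < 0 := by
      intro p hp
      by_cases hpq : p = q
      · subst hpq
        rcases arc_signs (hSsub hp) with h | h
        · omega
        · exact h.2
      · exact crosses_sign (hSsub hp) (hSsub hq) (hScross p hp q hq hpq) hq1'
    have hsub' : S.image negArc ⊆ P.arcs := by
      intro x hx
      obtain ⟨p, hp, rfl⟩ := Finset.mem_image.mp hx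
      exact negArc_mem (hSsub hp)
    have hcross' : ∀ a ∈ S.image negArc, ∀ b ∈ S.image negArc, a ≠ b → Crosses n a b := by
      intro a ha b hb hne
      obtain ⟨p, hp, rfl⟩ := Finset.mem_image.mp ha
      obtain ⟨p', hp', rfl⟩ := Finset.mem_image.mp hb
      exact negArc_crosses (hSsub hp) (hSsub hp')
        (hScross p hp p' hp' (fun h => hne (by rw [h])))
    have hall' : ∀ p ∈ S.image negArc, 0 < p.1 := by
      intro p hp
      obtain ⟨p', hp', rfl⟩ := Finset.mem_image.mp hp
      have := hneg p' hp'
      dsimp only [negArc]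
      omega
    have hle := seLen_aux P (S.image negArc) hsub' hcross' hall'
    rwa [Finset.card_image_of_injective _ negArc_inj] at hle

lemma seLen_le (P : SetPartitionC n) : seLen P.crossFill ≤ P.maxCrossing := by
  unfold seLen maxCrossing
  apply Finset.sup_le
  intro T hT
  simp only [Finset.mem_filter, Finset.mem_powerset] at hT
  obtain ⟨hTsub, hTchain, hTrect⟩ := hT
  have hex : ∀ c ∈ T, ∃ jj : ℤ, P.IsArc (c.1 : ℤ) jj ∧ crossOrd n jj = (c.2 : ℤ) + 1 := by
    intro c hc
    have h := hTsub hc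
    unfold crossFill at h
    exact (Finset.mem_filter.mp h).2
  have hcell : ∀ c ∈ T, (1 ≤ c.1 ∧ c.1 ≤ n) ∧ c.1 ≤ c.2 := by
    intro c hc
    have h := hTsub hc
    unfold crossFill cellsP at h
    have h' := Finset.mem_filter.mp (Finset.mem_filter.mp h).1
    simp only [Finset.mem_product, Finset.mem_Icc] at h'
    exact ⟨h'.1.1, h'.2⟩
  choose! j hj1 hj2 using hex
  set g : ℕ × ℕ → ℤ × ℤ := fun c => ((c.1 : ℤ), j c) with hg
  have hinj : Set.InjOn g T := by
    intro c hc d hd he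
    have e1 : (c.1 : ℤ) = (d.1 : ℤ) := congrArg Prod.fst he
    have e2 : j c = j d := congrArg Prod.snd he
    have e3 := hj2 c hc
    have e4 := hj2 d hd
    rw [e2] at e3
    exact Prod.ext (by omega) (by omega)
  rw [show T.card = (T.image g).card from (Finset.card_image_of_injOn hinj).symm]
  apply Finset.le_sup
  simp only [Finset.mem_filter, Finset.mem_powerset]
  constructor
  · intro x hx
    obtain ⟨c, hc, rfl⟩ := Finset.mem_image.mp hx
    exact mem_arcs.mpr (hj1 c hc)
  · intro x hx y hy hne
    obtain ⟨c, hc, rfl⟩ := Finset.mem_image.mp hx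
    obtain ⟨d, hd, rfl⟩ := Finset.mem_image.mp hy
    have hcd : c ≠ d := fun h => hne (by rw [h])
    have hc1 := hcell c hc
    have hd1 := hcell d hd
    have e3 := hj2 c hc
    have e4 := hj2 d hd
    have o1 : crossOrd n ((c.1 : ℕ) : ℤ) = ((c.1 : ℕ) : ℤ) :=
      crossOrd_of_pos (by omega)
    have o2 : crossOrd n ((d.1 : ℕ) : ℤ) = ((d.1 : ℕ) : ℤ) :=
      crossOrd_of_pos (by omega)
    have h := hTchain c hc d hd hcd
    have r1 := hTrect c hc d hd
    have r2 := hTrect d hd c hc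
    unfold Crosses CrossRel cpr
    dsimp only [g]
    rw [o1, o2, e3, e4]
    omega

end SetPartitionC

theorem stmt16 (n : ℕ) (hn : 0 < n) (P : SetPartitionC n) :
    neLen P.nestFill = P.maxNesting ∧ seLen P.crossFill = P.maxCrossing := by
  exact ⟨le_antisymm (SetPartitionC.neLen_le P) (SetPartitionC.le_neLen P),
    le_antisymm (SetPartitionC.seLen_le P) (SetPartitionC.le_seLen P)⟩
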